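/- Under forward parallel untreated trends, E[Y1(0) − Y0(0) | D0 = d0] = τ0 for d0 ∈ {0,1}, the unobserved untreated trend among switchers into treatment can be expressed as E[Y1(0) − Y0(0) | D0 < D1] = [P(D1=1|D0=1)/P(D1=1|D0=0)]·E[Y1(0) − Y0(0) | D0 = D1 = 1] + [P(D1=0|D0=1)/P(D1=1|D0=0)]·E[Y1(0) − Y0(0) | D0 > D1] − [P(D1=0|D0=0)/P(D1=1|D0=0)]·E[Y1(0) − Y0(0) | D0 = D1 = 0]. -/

import Mathlib

open MeasureTheory ProbabilityTheory

/-- Conditional expectation of a real random variable `Y` given the event `A`. -/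
noncomputable def cexp {Ω : Type*} {mΩ : MeasurableSpace Ω} (μ : Measure Ω) (A : Set Ω)
    (Y : Ω → ℝ) : ℝ := ∫ ω, Y ω ∂(@ProbabilityTheory.cond Ω mΩ μ A)

/-!
Write `p(j | i) = P(D1 = j | D0 = i)` and `E(i, j) = E[Y1(0) - Y0(0) | D0 = i, D1 = j]`.
By the law of total expectation over `D1`, parallel trends says
`τ0 = p(1 | i) E(i, 1) + p(0 | i) E(i, 0)` for `i = 0, 1`. Solving the equation for `i = 0`
for `E(0, 1)` and substituting the one for `i = 1` for `τ0` gives the identity.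
-/

section LawOfTotalExpectation

variable {Ω : Type*} [MeasurableSpace Ω] {μ : Measure Ω} {s t u : Set Ω} {Y : Ω → ℝ}

lemma cexp_eq_inv_mul_setIntegral (μ : Measure Ω) (A : Set Ω) (Y : Ω → ℝ) :
    cexp μ A Y = (μ A).toReal⁻¹ * ∫ ω in A, Y ω ∂μ := by
  rw [cexp, ProbabilityTheory.cond, integral_smul_measure, ENNReal.toReal_inv, smul_eq_mul]

lemma cond_toReal_mul_cexp_inter [IsFiniteMeasure μ] (hs : MeasurableSet s) (t : Set Ω)
    (Y : Ω → ℝ) :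
    (μ[t | s]).toReal * cexp μ (s ∩ t) Y = (μ s).toReal⁻¹ * ∫ ω in s ∩ t, Y ω ∂μ := by
  rw [cond_apply hs, cexp_eq_inv_mul_setIntegral, ENNReal.toReal_mul, ENNReal.toReal_inv]
  by_cases hst : μ (s ∩ t) = 0
  · simp [hst]
  · have : (μ (s ∩ t)).toReal ≠ 0 := ENNReal.toReal_ne_zero.mpr ⟨hst, measure_ne_top μ _⟩
    field_simp

lemma cexp_eq_cond_mul_cexp_add_cond_mul_cexp [IsFiniteMeasure μ] (hs : MeasurableSet s)
    (hu : MeasurableSet u) (hdisj : Disjoint t u) (hcover : s ⊆ t ∪ u) (hY : IntegrableOn Y s μ) :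
    cexp μ s Y = (μ[t | s]).toReal * cexp μ (s ∩ t) Y + (μ[u | s]).toReal * cexp μ (s ∩ u) Y := by
  have hsplit : s ∩ t ∪ s ∩ u = s := by
    rw [← Set.inter_union_distrib_left, Set.inter_eq_left.mpr hcover]
  rw [cond_toReal_mul_cexp_inter hs, cond_toReal_mul_cexp_inter hs, ← mul_add,
    ← setIntegral_union (hdisj.mono Set.inter_subset_right Set.inter_subset_right) (hs.inter hu)
      (hY.mono_set Set.inter_subset_left) (hY.mono_set Set.inter_subset_left),
    hsplit, cexp_eq_inv_mul_setIntegral]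

end LawOfTotalExpectation

theorem stmt_11_general {Ω : Type*} [MeasurableSpace Ω] (μ : Measure Ω) [IsProbabilityMeasure μ]
    (Y0 Y1 : Ω → ℝ) (hY0 : Integrable Y0 μ) (hY1 : Integrable Y1 μ)
    (D0 D1 : Ω → ℕ) (hD1 : ∀ ω, D1 ω ≤ 1)
    (hD0m : Measurable D0) (hD1m : Measurable D1)
    (hpos : ∀ d0 d1 : ℕ, d0 ≤ 1 → d1 ≤ 1 → 0 < μ {ω | D0 ω = d0 ∧ D1 ω = d1})
    (τ0 : ℝ)
    -- forward parallel untreated trends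
    (hfpt : ∀ d0 : ℕ, d0 ≤ 1 →
      cexp μ {ω | D0 ω = d0} (fun ω => Y1 ω - Y0 ω) = τ0) :
    cexp μ {ω | D0 ω = 0 ∧ D1 ω = 1} (fun ω => Y1 ω - Y0 ω)
      =
      ((μ[|{ω | D0 ω = 1}]) {ω | D1 ω = 1}).toReal
          / ((μ[|{ω | D0 ω = 0}]) {ω | D1 ω = 1}).toReal
        * cexp μ {ω | D0 ω = 1 ∧ D1 ω = 1} (fun ω => Y1 ω - Y0 ω)
      + ((μ[|{ω | D0 ω = 1}]) {ω | D1 ω = 0}).toReal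
          / ((μ[|{ω | D0 ω = 0}]) {ω | D1 ω = 1}).toReal
        * cexp μ {ω | D0 ω = 1 ∧ D1 ω = 0} (fun ω => Y1 ω - Y0 ω)
      - ((μ[|{ω | D0 ω = 0}]) {ω | D1 ω = 0}).toReal
          / ((μ[|{ω | D0 ω = 0}]) {ω | D1 ω = 1}).toReal
        * cexp μ {ω | D0 ω = 0 ∧ D1 ω = 0} (fun ω => Y1 ω - Y0 ω) := by
  have hB (i : ℕ) : MeasurableSet {ω | D0 ω = i} := hD0m (measurableSet_singleton i)
  have htotal (i : ℕ) (hi : i ≤ 1) :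
      τ0 = ((μ[|{ω | D0 ω = i}]) {ω | D1 ω = 1}).toReal
          * cexp μ {ω | D0 ω = i ∧ D1 ω = 1} (fun ω => Y1 ω - Y0 ω)
        + ((μ[|{ω | D0 ω = i}]) {ω | D1 ω = 0}).toReal
          * cexp μ {ω | D0 ω = i ∧ D1 ω = 0} (fun ω => Y1 ω - Y0 ω) := by
    rw [← hfpt i hi]
    refine cexp_eq_cond_mul_cexp_add_cond_mul_cexp (hB i) (hD1m (measurableSet_singleton 0))
      ?_ (fun ω _ => ?_) (hY1.sub hY0).integrableOn
    · exact Set.disjoint_left.mpr fun ω h1 h0 => absurd (h1.symm.trans h0) one_ne_zero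
    · have := hD1 ω
      simp only [Set.mem_union, Set.mem_ofPred_eq]
      omega
  have hswitch : 0 < ((μ[|{ω | D0 ω = 0}]) {ω | D1 ω = 1}).toReal :=
    ENNReal.toReal_pos (cond_pos_of_inter_ne_zero (hB 0) (hpos 0 1 zero_le_one le_rfl).ne').ne'
      (measure_ne_top _ _)
  have h0 := htotal 0 zero_le_one
  have h1 := htotal 1 le_rfl
  field_simp
  linear_combination h1 - h0

/-- Under forward parallel untreated trends, the unobserved untreated trend among
switchers into treatment is a linear combination of the untreated trends of the
always-treated, the switchers out of treatment, and the never-treated. -/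
theorem stmt_11 {Ω : Type*} [MeasurableSpace Ω] (μ : Measure Ω) [IsProbabilityMeasure μ]
    (Y0 Y1 : Ω → ℝ) (hY0 : Integrable Y0 μ) (hY1 : Integrable Y1 μ)
    (D0 D1 : Ω → ℕ) (hD0 : ∀ ω, D0 ω ≤ 1) (hD1 : ∀ ω, D1 ω ≤ 1)
    (hD0m : Measurable D0) (hD1m : Measurable D1)
    (hpos : ∀ d0 d1 : ℕ, d0 ≤ 1 → d1 ≤ 1 → 0 < μ {ω | D0 ω = d0 ∧ D1 ω = d1})
    (τ0 : ℝ)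
    -- forward parallel untreated trends
    (hfpt : ∀ d0 : ℕ, d0 ≤ 1 →
      cexp μ {ω | D0 ω = d0} (fun ω => Y1 ω - Y0 ω) = τ0) :
    cexp μ {ω | D0 ω = 0 ∧ D1 ω = 1} (fun ω => Y1 ω - Y0 ω)
      =
      ((μ[|{ω | D0 ω = 1}]) {ω | D1 ω = 1}).toReal
          / ((μ[|{ω | D0 ω = 0}]) {ω | D1 ω = 1}).toReal
        * cexp μ {ω | D0 ω = 1 ∧ D1 ω = 1} (fun ω => Y1 ω - Y0 ω)
      + ((μ[|{ω | D0 ω = 1}]) {ω | D1 ω = 0}).toReal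
          / ((μ[|{ω | D0 ω = 0}]) {ω | D1 ω = 1}).toReal
        * cexp μ {ω | D0 ω = 1 ∧ D1 ω = 0} (fun ω => Y1 ω - Y0 ω)
      - ((μ[|{ω | D0 ω = 0}]) {ω | D1 ω = 0}).toReal
          / ((μ[|{ω | D0 ω = 0}]) {ω | D1 ω = 1}).toReal
        * cexp μ {ω | D0 ω = 0 ∧ D1 ω = 0} (fun ω => Y1 ω - Y0 ω) :=
  stmt_11_general μ Y0 Y1 hY0 hY1 D0 D1 hD1 hD0m hD1m hpos τ0 hfpt
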